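/- arXiv:0804.2612 — 2 statements merged into one kernel-verified Lean document; each statement's English description precedes it below -/
import Mathlib

section
/- Let κ > 0 and let r be a positive integer. Set ρ = −2 + (κ/2)(1−r). Then h⁺(ρ) = h_{r,1}(κ) and h⁻(ρ) = h_{r,1}(κ) + r, where h_{r,s}(κ) = (κ/16)(r²−1) − (rs−1)/2 + (s²−1)/κ, h⁺(ρ) = (ρ² + 8ρ − ρκ + 12 − 2κ)/(4κ) and h⁻(ρ) = (ρ² − ρκ − 4 + 2κ)/(4κ). -/
/-- For `ρ = -2 + (κ/2)(1-r)` one has `h⁺(ρ) = h_{r,1}(κ)` and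
`h⁻(ρ) = h_{r,1}(κ) + r`. -/
theorem stmt_4 (κ : ℝ) (hκ : 0 < κ) (r : ℕ) (hr : 0 < r) (ρ : ℝ)
    (hρ : ρ = -2 + κ / 2 * (1 - (r : ℝ))) :
    (ρ ^ 2 + 8 * ρ - ρ * κ + 12 - 2 * κ) / (4 * κ)
        = κ / 16 * ((r : ℝ) ^ 2 - 1) - ((r : ℝ) * 1 - 1) / 2 + ((1 : ℝ) ^ 2 - 1) / κ
    ∧ (ρ ^ 2 - ρ * κ - 4 + 2 * κ) / (4 * κ)
        = (κ / 16 * ((r : ℝ) ^ 2 - 1) - ((r : ℝ) * 1 - 1) / 2 + ((1 : ℝ) ^ 2 - 1) / κ)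
            + (r : ℝ) := by
  subst hρ
  constructor <;> field_simp <;> ring
end

section
/- Let κ > 0 and take ρ = (κ−4)/2. On {(x,y) ∈ ℝ² : x > y}, the function Λ(x,y) = (x−y)^{(κ−4)/(2κ)} log(x−y) satisfies A_{κ;(κ−4)/2} Λ = 0; moreover (∂/∂x + ∂/∂y)Λ = 0 and (x ∂/∂x + y ∂/∂y)Λ + (h_{1,2}(κ) + h((κ−4)/2))Λ = ((8−κ)/16)·Λ + Z, where Z(x,y) = (x−y)^{(κ−4)/(2κ)}, h_{1,2}(κ) = (6−κ)/(2κ) and h(ρ) = ρ(ρ+4−κ)/(4κ). In other words, Λ is a logarithmic partner of Z forming an L₀ Jordan block at eigenvalue (8−κ)/16. -/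
/-- The SLE_κ(ρ=(κ-4)/2) partition function. -/
noncomputable def Z5 (κ x y : ℝ) : ℝ := (x - y) ^ ((κ - 4) / (2 * κ))

/-- The logarithmic partner of `Z5`. -/
noncomputable def Λ5 (κ x y : ℝ) : ℝ := (x - y) ^ ((κ - 4) / (2 * κ)) * Real.log (x - y)

/-!
Both `Λ5` and `Z5` are functions of `t = x - y` alone, so `L₁` kills them and the Euler operator
`x ∂ₓ + y ∂_y` acts as `t d/dt`. For `t ^ a log t` this gives `a · t ^ a log t + t ^ a`, the
Jordan-block shape, with eigenvalue `a + h_{1,2}(κ) + h(ρ) = (8 - κ)/16`. The equation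
`A_{κ;ρ} Λ = 0` reduces to an ODE in `t` that holds because `a = (κ - 4)/(2κ)` is a double root
of its indicial polynomial at `ρ = (κ - 4)/2`, which is what makes `log t` appear.
-/

open Real Filter Topology

namespace Real

theorem hasDerivAt_rpow_mul_log (a : ℝ) {t : ℝ} (ht : 0 < t) :
    HasDerivAt (fun s : ℝ => s ^ a * log s) (t ^ (a - 1) * (a * log t + 1)) t := by
  refine ((hasDerivAt_rpow_const (Or.inl ht.ne')).mul (hasDerivAt_log ht.ne')).congr_deriv ?_
  rw [rpow_sub ht, rpow_one]
  field_simp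

theorem deriv_rpow_mul_log_eventuallyEq (a : ℝ) {t : ℝ} (ht : 0 < t) :
    deriv (fun s : ℝ => s ^ a * log s) =ᶠ[𝓝 t] fun s => s ^ (a - 1) * (a * log s + 1) := by
  filter_upwards [eventually_gt_nhds ht] with s hs
  exact (hasDerivAt_rpow_mul_log a hs).deriv

theorem hasDerivAt_deriv_rpow_mul_log (a : ℝ) {t : ℝ} (ht : 0 < t) :
    HasDerivAt (deriv fun s : ℝ => s ^ a * log s)
      (t ^ (a - 2) * (a * (a - 1) * log t + 2 * a - 1)) t := by
  have hpow := hasDerivAt_rpow_const (p := a - 1) (Or.inl ht.ne')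
  have hlog := ((hasDerivAt_log ht.ne').const_mul a).add_const 1
  refine ((hpow.mul hlog).congr_of_eventuallyEq
    (deriv_rpow_mul_log_eventuallyEq a ht)).congr_deriv ?_
  rw [show a - 1 - 1 = a - 2 by ring, show a - 1 = a - 2 + 1 by ring, rpow_add_one ht.ne']
  field_simp
  ring

theorem mul_deriv_rpow_mul_log (a : ℝ) {t : ℝ} (ht : 0 < t) :
    t * deriv (fun s : ℝ => s ^ a * log s) t = a * (t ^ a * log t) + t ^ a := by
  rw [(hasDerivAt_rpow_mul_log a ht).deriv, rpow_sub_one ht.ne']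
  field_simp

theorem cauchyEuler_rpow_mul_log {α β γ a t : ℝ} (ht : 0 < t)
    (hroot : α * (a * (a - 1)) + β * a - γ = 0) (hdouble : α * (2 * a - 1) + β = 0) :
    α * deriv (deriv fun s : ℝ => s ^ a * log s) t + β / t * deriv (fun s : ℝ => s ^ a * log s) t
      - γ / t ^ 2 * (t ^ a * log t) = 0 := by
  rw [(hasDerivAt_deriv_rpow_mul_log a ht).deriv, (hasDerivAt_rpow_mul_log a ht).deriv,
    rpow_sub_one ht.ne', rpow_sub ht, rpow_two]
  linear_combination (t ^ a / t ^ 2 * log t) * hroot + (t ^ a / t ^ 2) * hdouble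

end Real

/-- For `ρ = (κ-4)/2`, the function `Λ(x,y) = (x-y)^{(κ-4)/(2κ)} log(x-y)`
satisfies `A_{κ;ρ} Λ = 0`, `L₁ Λ = 0` and forms an `L₀` Jordan block with `Z` at
eigenvalue `(8-κ)/16`. -/
theorem stmt_5 (κ : ℝ) (hκ : 0 < κ) (ρ : ℝ) (hρ : ρ = (κ - 4) / 2) :
    ∀ x y : ℝ, y < x →
      (κ / 2 * deriv (fun x' => deriv (fun x'' => Λ5 κ x'' y) x') x
          + 2 / (y - x) * deriv (fun y' => Λ5 κ x y') y
          - ρ * (ρ + 4 - κ) / (2 * κ) / (y - x) ^ 2 * Λ5 κ x y = 0)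
      ∧ (deriv (fun x' => Λ5 κ x' y) x + deriv (fun y' => Λ5 κ x y') y = 0)
      ∧ (x * deriv (fun x' => Λ5 κ x' y) x + y * deriv (fun y' => Λ5 κ x y') y
          + ((6 - κ) / (2 * κ) + ρ * (ρ + 4 - κ) / (4 * κ)) * Λ5 κ x y
          = (8 - κ) / 16 * Λ5 κ x y + Z5 κ x y) := by
  intro x y hxy
  set a := (κ - 4) / (2 * κ) with ha
  set P : ℝ → ℝ := fun s => s ^ a * log s
  have ht : 0 < x - y := sub_pos.mpr hxy
  have hDx (x' : ℝ) : deriv (fun x' => Λ5 κ x' y) x' = deriv P (x' - y) :=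
    deriv_comp_sub_const P y x'
  have hDy : deriv (fun y' => Λ5 κ x y') y = -deriv P (x - y) := deriv_comp_const_sub P x y
  have hDxx : deriv (fun x' => deriv (fun x'' => Λ5 κ x'' y) x') x = deriv (deriv P) (x - y) := by
    simp only [hDx]; exact deriv_comp_sub_const (deriv P) y x
  have hκ0 : κ ≠ 0 := hκ.ne'
  have hIndicial : κ / 2 * (a * (a - 1)) + 2 * a - ρ * (ρ + 4 - κ) / (2 * κ) = 0 := by
    rw [hρ, ha]; field_simp; ring
  have hDoubleRoot : κ / 2 * (2 * a - 1) + 2 = 0 := by rw [ha]; field_simp; ring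
  have hEigen : a + ((6 - κ) / (2 * κ) + ρ * (ρ + 4 - κ) / (4 * κ)) = (8 - κ) / 16 := by
    rw [hρ, ha]; field_simp; ring
  rw [hDxx, hDx, hDy]
  simp only [Λ5, Z5, ← ha, show y - x = -(x - y) by ring]
  refine ⟨?_, by ring, ?_⟩
  · generalize x - y = t at ht ⊢
    linear_combination cauchyEuler_rpow_mul_log ht hIndicial hDoubleRoot
  · linear_combination mul_deriv_rpow_mul_log a ht + ((x - y) ^ a * log (x - y)) * hEigen
end
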